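/- arXiv:1902.00141 — 4 statements merged into one kernel-verified Lean document; each statement's English description precedes it below -/
import Mathlib

section
/- For vectors x, y in R^n with x, y nonzero, the absolute value of the sine of the angle between x and y equals the infimum over all nonzero real α of ‖x − αy‖₂ / ‖αy‖₂. -/
open InnerProductGeometry

/-- For nonzero vectors `x, y ∈ ℝⁿ`, the absolute value of the sine of the angle between
`x` and `y` equals the infimum over all nonzero real `α` of `‖x - α • y‖ / ‖α • y‖`. -/
theorem sin_angle_eq_inf_dist (n : ℕ) (x y : EuclideanSpace ℝ (Fin n))
    (hx : x ≠ 0) (hy : y ≠ 0) :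
    sInf {r : ℝ | ∃ α : ℝ, α ≠ 0 ∧ r = ‖x - α • y‖ / ‖α • y‖}
      = |Real.sin (InnerProductGeometry.angle x y)| := by
  set S := {r : ℝ | ∃ α : ℝ, α ≠ 0 ∧ r = ‖x - α • y‖ / ‖α • y‖} with hS
  set s := Real.sin (InnerProductGeometry.angle x y) with hsdef
  have ha : (0:ℝ) < ‖x‖ := norm_pos_iff.mpr hx
  have hb : (0:ℝ) < ‖y‖ := norm_pos_iff.mpr hy
  have ha2 : (0:ℝ) < ‖x‖ ^ 2 := by positivity
  have hs0 : 0 ≤ s :=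
    Real.sin_nonneg_of_nonneg_of_le_pi (angle_nonneg x y) (angle_le_pi x y)
  set c := (inner ℝ x y : ℝ) with hc
  have hsin : s * (‖x‖ * ‖y‖) = Real.sqrt (‖x‖ ^ 2 * ‖y‖ ^ 2 - c * c) := by
    rw [hsdef, sin_angle_mul_norm_mul_norm, real_inner_self_eq_norm_sq,
      real_inner_self_eq_norm_sq]
  have hD : 0 ≤ ‖x‖ ^ 2 * ‖y‖ ^ 2 - c * c := by
    have := abs_real_inner_le_norm x y
    nlinarith [abs_nonneg c, sq_abs c]
  have hsin2 : s ^ 2 * (‖x‖ ^ 2 * ‖y‖ ^ 2) = ‖x‖ ^ 2 * ‖y‖ ^ 2 - c * c := by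
    have h := congrArg (· ^ 2) hsin
    rw [mul_pow, Real.sq_sqrt hD] at h
    nlinarith [h]
  -- norm of x - α • y
  have hnorm : ∀ α : ℝ, ‖x - α • y‖ ^ 2 = ‖x‖ ^ 2 - 2 * α * c + α ^ 2 * ‖y‖ ^ 2 := by
    intro α
    rw [norm_sub_sq_real, real_inner_smul_right, norm_smul, Real.norm_eq_abs,
      mul_pow, sq_abs, ← hc]
    ring
  have hsmul : ∀ α : ℝ, ‖α • y‖ = |α| * ‖y‖ := by
    intro α; rw [norm_smul]; simp
  have hsq : ∀ α : ℝ, (s * (|α| * ‖y‖)) ^ 2 = s ^ 2 * (α ^ 2 * ‖y‖ ^ 2) := by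
    intro α; rw [mul_pow, mul_pow, sq_abs]
  have hkeysq : ∀ α : ℝ, α ^ 2 * (s ^ 2 * (‖x‖ ^ 2 * ‖y‖ ^ 2))
      = α ^ 2 * (‖x‖ ^ 2 * ‖y‖ ^ 2 - c * c) := fun α => by rw [hsin2]
  -- lower bound: every element of S is ≥ s
  have hlow : ∀ r ∈ S, s ≤ r := by
    rintro r ⟨α, hα, rfl⟩
    have hαy : (0:ℝ) < ‖α • y‖ := by
      rw [hsmul]
      have : (0:ℝ) < |α| := abs_pos.mpr hα
      positivity
    rw [le_div_iff₀ hαy]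
    have h1 : (s * ‖α • y‖) ^ 2 ≤ ‖x - α • y‖ ^ 2 := by
      rw [hsmul, hnorm, hsq]
      have h3 : s ^ 2 * (α ^ 2 * ‖y‖ ^ 2) * ‖x‖ ^ 2
          ≤ (‖x‖ ^ 2 - 2 * α * c + α ^ 2 * ‖y‖ ^ 2) * ‖x‖ ^ 2 := by
        nlinarith [hkeysq α, sq_nonneg (‖x‖ ^ 2 - α * c)]
      exact le_of_mul_le_mul_right h3 ha2
    calc s * ‖α • y‖ = Real.sqrt ((s * ‖α • y‖) ^ 2) := by
          rw [Real.sqrt_sq (by positivity)]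
      _ ≤ Real.sqrt (‖x - α • y‖ ^ 2) := Real.sqrt_le_sqrt h1
      _ = ‖x - α • y‖ := Real.sqrt_sq (norm_nonneg _)
  have hne : S.Nonempty := ⟨‖x - (1:ℝ) • y‖ / ‖(1:ℝ) • y‖, 1, one_ne_zero, rfl⟩
  have hbdd : BddBelow S := ⟨s, fun r hr => hlow r hr⟩
  rw [abs_of_nonneg hs0]
  refine le_antisymm ?_ (le_csInf hne hlow)
  -- upper bound
  by_cases hc0 : c = 0
  · -- here s = 1
    have hs1 : s = 1 := by
      have h4 : s ^ 2 = 1 := by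
        have h5 := hsin2
        rw [hc0] at h5
        have h2 : (0:ℝ) < ‖x‖ ^ 2 * ‖y‖ ^ 2 := by positivity
        nlinarith
      nlinarith
    rw [hs1, Real.sInf_le_iff hbdd hne]
    intro ε hε
    obtain ⟨α, hαdef⟩ : ∃ α : ℝ, α = ‖x‖ / (ε * ‖y‖) + 1 := ⟨_, rfl⟩
    have hαpos : 0 < α := by rw [hαdef]; positivity
    refine ⟨‖x - α • y‖ / ‖α • y‖, ⟨α, ne_of_gt hαpos, rfl⟩, ?_⟩
    have hαy : (0:ℝ) < ‖α • y‖ := by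
      rw [hsmul, abs_of_pos hαpos]; positivity
    rw [div_lt_iff₀ hαy]
    have htri : ‖x - α • y‖ ≤ ‖x‖ + ‖α • y‖ := norm_sub_le _ _
    have hkey : ‖x‖ < ε * ‖α • y‖ := by
      rw [hsmul, abs_of_pos hαpos, hαdef]
      have heq : ε * ((‖x‖ / (ε * ‖y‖) + 1) * ‖y‖) = ‖x‖ + ε * ‖y‖ := by
        field_simp
      rw [heq]
      nlinarith [mul_pos hε hb]
    nlinarith
  · -- optimal α = ‖x‖^2 / c attains s
    obtain ⟨α, hαdef⟩ : ∃ α : ℝ, α = ‖x‖ ^ 2 / c := ⟨_, rfl⟩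
    have hα : α ≠ 0 := hαdef ▸ div_ne_zero (by positivity) hc0
    have hαy : (0:ℝ) < ‖α • y‖ := by
      rw [hsmul]
      have : (0:ℝ) < |α| := abs_pos.mpr hα
      positivity
    refine csInf_le_of_le hbdd ⟨α, hα, rfl⟩ ?_
    rw [div_le_iff₀ hαy]
    have hαc : α * c = ‖x‖ ^ 2 := by
      rw [hαdef]; field_simp
    have h1 : ‖x - α • y‖ ^ 2 ≤ (s * ‖α • y‖) ^ 2 := by
      rw [hsmul, hnorm, hsq]
      have h3 : (‖x‖ ^ 2 - 2 * α * c + α ^ 2 * ‖y‖ ^ 2) * ‖x‖ ^ 2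
          = s ^ 2 * (α ^ 2 * ‖y‖ ^ 2) * ‖x‖ ^ 2 := by
        linear_combination (-1 : ℝ) * hkeysq α + (α * c - ‖x‖ ^ 2) * hαc
      exact le_of_mul_le_mul_right (le_of_eq h3) ha2
    calc ‖x - α • y‖ = Real.sqrt (‖x - α • y‖ ^ 2) := by
          rw [Real.sqrt_sq (norm_nonneg _)]
      _ ≤ Real.sqrt ((s * ‖α • y‖) ^ 2) := Real.sqrt_le_sqrt h1
      _ = s * ‖α • y‖ := Real.sqrt_sq (by positivity)
end

section
/- Let x ∈ R^n have strictly positive entries with max_{i,j} x_i/x_j ≤ b for some b ≥ 1. Then ‖x‖₂/‖x‖₁ ≤ min(1, √(b/n)). -/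
open scoped BigOperators

/-- If `x ∈ ℝⁿ` has strictly positive entries with `xᵢ/xⱼ ≤ b` for all `i, j`
(where `b ≥ 1`), then `‖x‖₂ / ‖x‖₁ ≤ min 1 √(b/n)`. -/
theorem norm_ratio_le (n : ℕ) (x : EuclideanSpace ℝ (Fin n)) (b : ℝ) (hb : 1 ≤ b)
    (hx : ∀ i, 0 < x i) (hratio : ∀ i j, x i / x j ≤ b) :
    ‖x‖ / (∑ i, |x i|) ≤ min 1 (Real.sqrt (b / n)) := by
  rcases Nat.eq_zero_or_pos n with hn | hn
  · subst hn
    have hx0 : x = 0 := Subsingleton.elim x 0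
    simp [hx0]
  have hnpos : (0 : ℝ) < n := by exact_mod_cast hn
  set S : ℝ := ∑ i, x i with hS
  have habs : (∑ i, |x i|) = S := by
    apply Finset.sum_congr rfl
    intro i _
    exact abs_of_pos (hx i)
  have hSpos : 0 < S := Finset.sum_pos (fun i _ => hx i) ⟨⟨0, hn⟩, Finset.mem_univ _⟩
  have hxleS : ∀ i, x i ≤ S := fun i =>
    Finset.single_le_sum (fun j _ => (hx j).le) (Finset.mem_univ i)
  set T : ℝ := ∑ i, (x i) ^ 2 with hT
  have hTnn : 0 ≤ T := Finset.sum_nonneg fun i _ => sq_nonneg _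
  have hxb : ∀ i j, x i ≤ b * x j := by
    intro i j
    have := hratio i j
    rw [div_le_iff₀ (hx j)] at this
    linarith [this]
  -- T ≤ S^2
  have h1 : T ≤ S ^ 2 := by
    have : T ≤ ∑ i, x i * S := by
      apply Finset.sum_le_sum
      intro i _
      have := hxleS i
      nlinarith [(hx i).le]
    rwa [← Finset.sum_mul, ← hS, ← sq] at this
  -- n * T ≤ b * S^2
  have h2 : (n : ℝ) * T ≤ b * S ^ 2 := by
    have key : ∀ j : Fin n, T ≤ b * x j * S := by
      intro j
      have : T ≤ ∑ i, x i * (b * x j) := by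
        apply Finset.sum_le_sum
        intro i _
        have := hxb i j
        nlinarith [(hx i).le]
      rw [← Finset.sum_mul, ← hS] at this
      linarith [this]
    have hsum : ∑ _j : Fin n, T ≤ ∑ j : Fin n, b * x j * S :=
      Finset.sum_le_sum fun j _ => key j
    have hl : ∑ _j : Fin n, T = (n : ℝ) * T := by
      simp [Finset.sum_const, nsmul_eq_mul]
    have hr : ∑ j : Fin n, b * x j * S = b * S ^ 2 := by
      rw [← Finset.sum_mul, ← Finset.mul_sum, ← hS]; ring
    rw [hl, hr] at hsum
    exact hsum
  have hnorm : ‖x‖ = Real.sqrt T := by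
    rw [EuclideanSpace.norm_eq]
    congr 1
    apply Finset.sum_congr rfl
    intro i _
    rw [Real.norm_eq_abs, sq_abs]
  have h3 : Real.sqrt T ≤ S := by
    have : Real.sqrt T ≤ Real.sqrt (S ^ 2) := Real.sqrt_le_sqrt h1
    rwa [Real.sqrt_sq hSpos.le] at this
  have h4 : Real.sqrt T ≤ Real.sqrt (b / n) * S := by
    have hTle : T ≤ (b / n) * S ^ 2 := by
      rw [div_mul_eq_mul_div, le_div_iff₀ hnpos]
      linarith [h2]
    have : Real.sqrt T ≤ Real.sqrt ((b / n) * S ^ 2) := Real.sqrt_le_sqrt hTle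
    rwa [Real.sqrt_mul (by positivity), Real.sqrt_sq hSpos.le] at this
  rw [habs, hnorm, div_le_iff₀ hSpos, min_mul_of_nonneg _ _ hSpos.le, one_mul]
  exact le_min h3 h4
end

section
/- Let x, y ∈ R^n be entrywise positive vectors with max_{i,j} x_i/x_j ≤ b. Then D(x,y) ≤ min(1+√n, 1+√b) · √2 · |sin(x,y)|, where D(x,y) = ‖x/‖x‖₁ − y/‖y‖₁‖₂ / ‖y/‖y‖₁‖₂. -/
open scoped BigOperators

set_option maxHeartbeats 800000 in
/-- For entrywise positive `x, y ∈ ℝⁿ` with `xᵢ/xⱼ ≤ b`,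
`D(x,y) ≤ min (1+√n) (1+√b) · √2 · |sin(x,y)|`, where
`D(x,y) = ‖x/‖x‖₁ - y/‖y‖₁‖₂ / ‖y/‖y‖₁‖₂`. -/
theorem D_le_sin_angle (n : ℕ) (x y : EuclideanSpace ℝ (Fin n)) (b : ℝ) (hb : 1 ≤ b)
    (hxpos : ∀ i, 0 < x i) (hypos : ∀ i, 0 < y i)
    (hratio : ∀ i j, x i / x j ≤ b) :
    ‖(∑ i, |x i|)⁻¹ • x - (∑ i, |y i|)⁻¹ • y‖ / ‖(∑ i, |y i|)⁻¹ • y‖ ≤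
      min (1 + Real.sqrt n) (1 + Real.sqrt b) * Real.sqrt 2 *
        |Real.sin (InnerProductGeometry.angle x y)| := by
  rcases Nat.eq_zero_or_pos n with hn | hn
  · subst hn
    have hx0 : (∑ i, |x i|) = 0 := by simp
    have hy0 : (∑ i, |y i|) = 0 := by simp
    rw [hx0, hy0]
    have h0 : ((0:ℝ))⁻¹ • x - (0:ℝ)⁻¹ • y = 0 := Subsingleton.elim _ _
    rw [h0, norm_zero, zero_div]
    have h1 : (0:ℝ) ≤ min (1 + Real.sqrt 0) (1 + Real.sqrt b) :=
      le_min (by positivity) (by positivity)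
    have : ((0:ℕ):ℝ) = (0:ℝ) := by norm_num
    rw [this]
    positivity
  haveI : Nonempty (Fin n) := Fin.pos_iff_nonempty.mp hn
  set θ := InnerProductGeometry.angle x y with hθ
  set Sx := ∑ i, x i with hSxdef
  set Sy := ∑ i, y i with hSydef
  set P := ∑ i, x i * y i with hPdef
  set Q := ∑ i, x i * x i with hQdef
  set R := ∑ i, y i * y i with hRdef
  have habsx : (∑ i, |x i|) = Sx := Finset.sum_congr rfl fun i _ => abs_of_pos (hxpos i)
  have habsy : (∑ i, |y i|) = Sy := Finset.sum_congr rfl fun i _ => abs_of_pos (hypos i)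
  have hSx : 0 < Sx := Finset.sum_pos (fun i _ => hxpos i) Finset.univ_nonempty
  have hSy : 0 < Sy := Finset.sum_pos (fun i _ => hypos i) Finset.univ_nonempty
  have hQ : 0 < Q := Finset.sum_pos (fun i _ => mul_pos (hxpos i) (hxpos i)) Finset.univ_nonempty
  have hR : 0 < R := Finset.sum_pos (fun i _ => mul_pos (hypos i) (hypos i)) Finset.univ_nonempty
  have hX2 : ‖x‖ ^ 2 = Q := by
    rw [EuclideanSpace.norm_eq, Real.sq_sqrt (by positivity)]; simp [sq, hQdef]
  have hY2 : ‖y‖ ^ 2 = R := by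
    rw [EuclideanSpace.norm_eq, Real.sq_sqrt (by positivity)]; simp [sq, hRdef]
  have hX : 0 < ‖x‖ := by nlinarith [norm_nonneg x]
  have hY : 0 < ‖y‖ := by nlinarith [norm_nonneg y]
  -- Cauchy-Schwarz: P^2 ≤ Q*R
  have hCS : P ^ 2 ≤ Q * R := by
    have := Finset.sum_mul_sq_le_sq_mul_sq Finset.univ (fun i => x i) (fun i => y i)
    simpa [sq, ← hPdef, ← hQdef, ← hRdef] using this
  -- key Cauchy-Schwarz inequality
  have key : (Q * Sy - P * Sx) ^ 2 ≤ (Q * R - P ^ 2) * ((n : ℝ) * Q - Sx ^ 2) := by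
    have hcs := Finset.sum_mul_sq_le_sq_mul_sq Finset.univ
      (fun i => Q * y i - P * x i) (fun i => Q - Sx * x i)
    have s1 : ∑ i, (Q * y i - P * x i) * (Q - Sx * x i) = Q * (Q * Sy - P * Sx) := by
      have h : ∀ i, (Q * y i - P * x i) * (Q - Sx * x i)
          = Q * Q * y i - (Q * Sx) * (x i * y i) - (P * Q) * x i + (P * Sx) * (x i * x i) :=
        fun i => by ring
      simp only [h, Finset.sum_add_distrib, Finset.sum_sub_distrib, ← Finset.mul_sum,
        ← hSxdef, ← hSydef, ← hPdef, ← hQdef]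
      ring
    have s2 : ∑ i, (Q * y i - P * x i) ^ 2 = Q * (Q * R - P ^ 2) := by
      have h : ∀ i, (Q * y i - P * x i) ^ 2
          = (Q * Q) * (y i * y i) - (2 * Q * P) * (x i * y i) + (P * P) * (x i * x i) :=
        fun i => by ring
      simp only [h, Finset.sum_add_distrib, Finset.sum_sub_distrib, ← Finset.mul_sum,
        ← hSxdef, ← hSydef, ← hPdef, ← hQdef, ← hRdef]
      ring
    have s3 : ∑ i, (Q - Sx * x i) ^ 2 = Q * ((n : ℝ) * Q - Sx ^ 2) := by
      have h : ∀ i, (Q - Sx * x i) ^ 2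
          = Q * Q - (2 * Q * Sx) * x i + (Sx * Sx) * (x i * x i) := fun i => by ring
      simp only [h, Finset.sum_add_distrib, Finset.sum_sub_distrib, ← Finset.mul_sum,
        ← hSxdef, ← hQdef, Finset.sum_const, Finset.card_univ, Fintype.card_fin,
        nsmul_eq_mul]
      ring
    rw [s1, s2, s3] at hcs
    have hcs' : Q ^ 2 * ((Q * Sy - P * Sx) ^ 2)
        ≤ Q ^ 2 * ((Q * R - P ^ 2) * ((n : ℝ) * Q - Sx ^ 2)) := by linarith [hcs]
    exact le_of_mul_le_mul_left hcs' (by positivity)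
  -- Kantorovich
  have hKant : 4 * b * ((n : ℝ) * Q) ≤ (b + 1) ^ 2 * Sx ^ 2 := by
    obtain ⟨j₀, -, hj₀⟩ := Finset.exists_mem_eq_inf' Finset.univ_nonempty (fun i => x i)
    set m := Finset.univ.inf' Finset.univ_nonempty (fun i => x i) with hmdef
    have hm_le : ∀ i, m ≤ x i := fun i => Finset.inf'_le _ (Finset.mem_univ i)
    have hmpos : 0 < m := hj₀ ▸ hxpos j₀
    have hub : ∀ i, x i ≤ b * m := by
      intro i
      have h := hratio i j₀
      rw [div_le_iff₀ (hxpos j₀)] at h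
      rw [hj₀]; linarith
    have hsum : Q ≤ (b + 1) * m * Sx - b * m ^ 2 * n := by
      have h : ∀ i ∈ Finset.univ, x i * x i ≤ (b + 1) * m * x i - b * m ^ 2 := by
        intro i _
        nlinarith [mul_nonneg (sub_nonneg.2 (hub i)) (sub_nonneg.2 (hm_le i))]
      calc Q ≤ ∑ i, ((b + 1) * m * x i - b * m ^ 2) := Finset.sum_le_sum h
        _ = (b + 1) * m * Sx - b * m ^ 2 * n := by
            rw [Finset.sum_sub_distrib, ← Finset.mul_sum, ← hSxdef]
            simp only [Finset.sum_const, Finset.card_univ, Fintype.card_fin, nsmul_eq_mul]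
            ring
    have h4bn : (0:ℝ) ≤ 4 * b * (n : ℝ) := by positivity
    nlinarith [mul_le_mul_of_nonneg_left hsum h4bn,
      sq_nonneg ((b + 1) * Sx - 2 * b * (n : ℝ) * m)]
  -- Q ≤ Sx^2
  have hQle : Q ≤ Sx ^ 2 := by
    have h : ∀ i ∈ Finset.univ, x i * x i ≤ x i * Sx := by
      intro i _
      exact mul_le_mul_of_nonneg_left
        (Finset.single_le_sum (fun j _ => (hxpos j).le) (Finset.mem_univ i)) (hxpos i).le
    calc Q ≤ ∑ i, x i * Sx := Finset.sum_le_sum h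
      _ = Sx ^ 2 := by rw [← Finset.sum_mul, ← hSxdef]; ring
  -- the min bound
  set K := min (1 + Real.sqrt n) (1 + Real.sqrt b) with hKdef
  have hKpos : 0 < K := lt_min (by positivity) (by positivity)
  have hK2 : (n : ℝ) * Q ≤ 2 * K ^ 2 * Sx ^ 2 := by
    rcases min_cases (1 + Real.sqrt n) (1 + Real.sqrt b) with ⟨hK, -⟩ | ⟨hK, -⟩
    · rw [hKdef, hK]
      have hs : Real.sqrt n ^ 2 = n := Real.sq_sqrt (Nat.cast_nonneg n)
      have hs0 : 0 ≤ Real.sqrt n := Real.sqrt_nonneg _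
      nlinarith [mul_le_mul_of_nonneg_left hQle (Nat.cast_nonneg n : (0:ℝ) ≤ n),
        mul_nonneg (mul_nonneg hs0 hs0) (sq_nonneg Sx), mul_nonneg hs0 (sq_nonneg Sx),
        sq_nonneg Sx]
    · rw [hKdef, hK]
      have hs : Real.sqrt b ^ 2 = b := Real.sq_sqrt (by linarith)
      have hs1 : 1 ≤ Real.sqrt b := by
        rw [show (1:ℝ) = Real.sqrt 1 by simp]; exact Real.sqrt_le_sqrt hb
      have hbineq : (b + 1) ^ 2 ≤ 4 * b * (2 * (1 + Real.sqrt b) ^ 2) := by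
        nlinarith [hs, hs1, sq_nonneg (Real.sqrt b - 1)]
      have h1 : 4 * b * ((n : ℝ) * Q) ≤ 4 * b * (2 * (1 + Real.sqrt b) ^ 2 * Sx ^ 2) := by
        calc 4 * b * ((n : ℝ) * Q) ≤ (b + 1) ^ 2 * Sx ^ 2 := hKant
          _ ≤ 4 * b * (2 * (1 + Real.sqrt b) ^ 2) * Sx ^ 2 := by
              exact mul_le_mul_of_nonneg_right hbineq (sq_nonneg Sx)
          _ = 4 * b * (2 * (1 + Real.sqrt b) ^ 2 * Sx ^ 2) := by ring
      exact le_of_mul_le_mul_left h1 (by positivity)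
  -- the norm of the difference
  set A := ‖(Sx)⁻¹ • x - (Sy)⁻¹ • y‖ with hAdef
  have hA2 : A ^ 2 * (Sx ^ 2 * Sy ^ 2) = Q * Sy ^ 2 - 2 * P * Sx * Sy + Sx ^ 2 * R := by
    have h1 : A ^ 2 = ∑ i, (Sx⁻¹ * x i - Sy⁻¹ * y i) ^ 2 := by
      rw [hAdef, EuclideanSpace.norm_eq, Real.sq_sqrt (by positivity)]
      apply Finset.sum_congr rfl
      intro i _
      rw [Real.norm_eq_abs, sq_abs]
      congr 1
    have h : ∀ i, (Sx⁻¹ * x i - Sy⁻¹ * y i) ^ 2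
        = (Sx⁻¹ * Sx⁻¹) * (x i * x i) - (2 * Sx⁻¹ * Sy⁻¹) * (x i * y i)
          + (Sy⁻¹ * Sy⁻¹) * (y i * y i) := fun i => by ring
    rw [h1]
    simp only [h, Finset.sum_add_distrib, Finset.sum_sub_distrib, ← Finset.mul_sum,
      ← hPdef, ← hQdef, ← hRdef]
    field_simp
  -- norm of v
  have hnv : ‖(Sy)⁻¹ • y‖ = Sy⁻¹ * ‖y‖ := by
    rw [norm_smul, Real.norm_eq_abs, abs_of_pos (by positivity)]
  -- sine
  have hsin2 : Real.sin θ ^ 2 * (Q * R) = Q * R - P ^ 2 := by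
    have hc := InnerProductGeometry.cos_angle x y
    have hip : (inner ℝ x y : ℝ) = P := by
      simp [PiLp.inner_apply, RCLike.inner_apply, conj_trivial, hPdef, mul_comm]
    rw [hip] at hc
    have hs := Real.sin_sq θ
    rw [← hθ] at hc
    rw [hs, hc]
    have : (P / (‖x‖ * ‖y‖)) ^ 2 = P ^ 2 / (Q * R) := by
      rw [div_pow, mul_pow, hX2, hY2]
    rw [this]
    field_simp
  -- combine: squared inequality
  have hQRP : 0 ≤ Q * R - P ^ 2 := by linarith
  have core : (Q * Sy ^ 2 - 2 * P * Sx * Sy + Sx ^ 2 * R) * Q ≤ ((n:ℝ) * Q) * (Q * R - P ^ 2) := by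
    nlinarith [key]
  have h6 : A ^ 2 * Sy ^ 2 * Q ≤ 2 * K ^ 2 * (Q * R - P ^ 2) := by
    have h2 : (A ^ 2 * (Sx ^ 2 * Sy ^ 2)) * Q ≤ ((n:ℝ) * Q) * (Q * R - P ^ 2) := by
      rw [hA2]; exact core
    have h3 : ((n:ℝ) * Q) * (Q * R - P ^ 2) ≤ (2 * K ^ 2 * Sx ^ 2) * (Q * R - P ^ 2) :=
      mul_le_mul_of_nonneg_right hK2 hQRP
    have h5 : (A ^ 2 * Sy ^ 2 * Q) * Sx ^ 2 ≤ (2 * K ^ 2 * (Q * R - P ^ 2)) * Sx ^ 2 := by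
      nlinarith [h2, h3]
    exact le_of_mul_le_mul_right h5 (by positivity)
  -- final conversion
  rw [habsx, habsy, hnv, ← hAdef]
  have hAnn : 0 ≤ A := hAdef ▸ norm_nonneg _
  clear_value Sx Sy P Q R A K θ
  have hL2 : (A / (Sy⁻¹ * ‖y‖)) ^ 2 ≤ (K * Real.sqrt 2 * |Real.sin θ|) ^ 2 := by
    have e1 : (A / (Sy⁻¹ * ‖y‖)) ^ 2 = A ^ 2 * Sy ^ 2 / R := by
      rw [div_pow, mul_pow, inv_pow, hY2]
      rw [div_eq_div_iff (mul_ne_zero (inv_ne_zero (pow_ne_zero 2 hSy.ne')) hR.ne') hR.ne']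
      field_simp
    have e2 : (K * Real.sqrt 2 * |Real.sin θ|) ^ 2 = 2 * K ^ 2 * Real.sin θ ^ 2 := by
      rw [mul_pow, mul_pow, sq_abs, Real.sq_sqrt (by norm_num : (0:ℝ) ≤ 2)]
      ring
    rw [e1, e2]
    rw [div_le_iff₀ hR]
    have hsin2' : Real.sin θ ^ 2 * R * Q = Q * R - P ^ 2 := by
      rw [← hsin2]; ring
    have h7 : A ^ 2 * Sy ^ 2 * Q ≤ 2 * K ^ 2 * (Real.sin θ ^ 2 * R * Q) := by
      rw [hsin2']; exact h6
    have h8 : (A ^ 2 * Sy ^ 2) * Q ≤ (2 * K ^ 2 * Real.sin θ ^ 2 * R) * Q := by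
      linarith [h7]
    exact le_of_mul_le_mul_right h8 hQ
  have hLnn : 0 ≤ A / (Sy⁻¹ * ‖y‖) :=
    div_nonneg hAnn (mul_nonneg (inv_nonneg.2 hSy.le) (norm_nonneg y))
  have hRnn : 0 ≤ K * Real.sqrt 2 * |Real.sin θ| :=
    mul_nonneg (mul_nonneg hKpos.le (Real.sqrt_nonneg 2)) (abs_nonneg _)
  have hfin := Real.sqrt_le_sqrt hL2
  rwa [Real.sqrt_sq hLnn, Real.sqrt_sq hRnn] at hfin
end

section
/- Suppose for nonnegative reals s_{ij} (i,j = 1,…,n) with s_avg := (1/n²)·Σ_{a,b} s_{ab}, positive vectors w, Ŵ ∈ R^n satisfy (Ŵ_i/Ŵ_j − w_i/w_j)² ≤ (w_i/w_j)² s_{ij} for all i, j, and max_{i,j} w_i/w_j ≤ b. Then there exists an index ℓ such that with α = Ŵ_ℓ/w_ℓ, ‖Ŵ − αw‖₂² / ‖αw‖₂² ≤ b² s_avg. -/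
open scoped BigOperators

/-- If positive vectors `w, Ŵ` satisfy `(Ŵᵢ/Ŵⱼ - wᵢ/wⱼ)² ≤ (wᵢ/wⱼ)² sᵢⱼ` for all `i,j`,
`max wᵢ/wⱼ ≤ b`, and `s_avg = (1/n²) Σ s_{ab}`, then there exists `ℓ` such that with
`α = Ŵ_ℓ/w_ℓ`, `‖Ŵ - αw‖₂²/‖αw‖₂² ≤ b² s_avg`. -/
theorem exists_index_rel_error_le_avg (n : ℕ) (hn : 0 < n) (s : Fin n → Fin n → ℝ)
    (hs : ∀ i j, 0 ≤ s i j) (w What : Fin n → ℝ) (b : ℝ)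
    (hw : ∀ i, 0 < w i) (hWhat : ∀ i, 0 < What i)
    (hb : ∀ i j, w i / w j ≤ b)
    (hclose : ∀ i j, (What i / What j - w i / w j) ^ 2 ≤ (w i / w j) ^ 2 * s i j) :
    ∃ ℓ : Fin n,
      (∑ i, (What i - (What ℓ / w ℓ) * w i) ^ 2) /
          (∑ i, ((What ℓ / w ℓ) * w i) ^ 2)
        ≤ b ^ 2 * ((∑ a, ∑ c, s a c) / (n : ℝ) ^ 2) := by
  obtain ⟨ℓ, -, hℓ⟩ := Finset.exists_min_image Finset.univ (fun c => ∑ i, s i c)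
    ⟨⟨0, hn⟩, Finset.mem_univ _⟩
  refine ⟨ℓ, ?_⟩
  have hwℓ := hw ℓ
  have hWℓ := hWhat ℓ
  set A : ℝ := ∑ i, (w i / w ℓ) ^ 2 with hA_def
  set S : ℝ := ∑ i, s i ℓ with hS_def
  set T : ℝ := ∑ a, ∑ c, s a c with hT_def
  have hnpos : (0:ℝ) < n := by exact_mod_cast hn
  have hb1 : (1:ℝ) ≤ b := by
    have := hb ℓ ℓ; rwa [div_self hwℓ.ne'] at this
  have hbpos : 0 < b := lt_of_lt_of_le one_pos hb1
  have hApos : 0 < A := by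
    apply Finset.sum_pos (fun i _ => pow_pos (div_pos (hw i) hwℓ) 2)
    exact ⟨ℓ, Finset.mem_univ _⟩
  have hSnn : 0 ≤ S := Finset.sum_nonneg fun i _ => hs i ℓ
  -- n * S ≤ T
  have hnS : (n:ℝ) * S ≤ T := by
    have : ∀ c : Fin n, S ≤ ∑ i, s i c := fun c => hℓ c (Finset.mem_univ c)
    calc (n:ℝ) * S = ∑ _c : Fin n, S := by
          rw [Finset.sum_const, Finset.card_univ, Fintype.card_fin, nsmul_eq_mul]
      _ ≤ ∑ c, ∑ i, s i c := Finset.sum_le_sum fun c _ => this c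
      _ = T := Finset.sum_comm
  -- each (w i / w ℓ)^2 ≤ b^2 * A / n
  have hrho : ∀ i, (n:ℝ) * (w i / w ℓ) ^ 2 ≤ b ^ 2 * A := by
    intro i
    have h1 : ∀ j : Fin n, (w i / w ℓ) ^ 2 ≤ b ^ 2 * (w j / w ℓ) ^ 2 := by
      intro j
      have hij : w i ≤ b * w j := by
        have := hb i j
        rwa [div_le_iff₀ (hw j)] at this
      have h2 : w i / w ℓ ≤ b * (w j / w ℓ) := by
        rw [div_le_iff₀ hwℓ, mul_assoc, div_mul_cancel₀ _ hwℓ.ne']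
        exact hij
      have h3 : 0 ≤ w i / w ℓ := le_of_lt (div_pos (hw i) hwℓ)
      nlinarith [sq_nonneg (w j / w ℓ)]
    calc (n:ℝ) * (w i / w ℓ) ^ 2 = ∑ _j : Fin n, (w i / w ℓ) ^ 2 := by
          rw [Finset.sum_const, Finset.card_univ, Fintype.card_fin, nsmul_eq_mul]
      _ ≤ ∑ j, b ^ 2 * (w j / w ℓ) ^ 2 := Finset.sum_le_sum fun j _ => h1 j
      _ = b ^ 2 * A := by rw [← Finset.mul_sum]
  -- denominator equals Whatℓ² * A, positive
  have hden : (∑ i, ((What ℓ / w ℓ) * w i) ^ 2) = What ℓ ^ 2 * A := by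
    rw [Finset.mul_sum]
    apply Finset.sum_congr rfl
    intro i _
    field_simp
  have hdenpos : 0 < ∑ i, ((What ℓ / w ℓ) * w i) ^ 2 := by
    rw [hden]; positivity
  rw [div_le_iff₀ hdenpos, hden]
  -- numerator bound
  have hnum : (∑ i, (What i - (What ℓ / w ℓ) * w i) ^ 2)
      ≤ What ℓ ^ 2 * ∑ i, (w i / w ℓ) ^ 2 * s i ℓ := by
    rw [Finset.mul_sum]
    apply Finset.sum_le_sum
    intro i _
    have hid : (What i - (What ℓ / w ℓ) * w i) ^ 2
        = What ℓ ^ 2 * (What i / What ℓ - w i / w ℓ) ^ 2 := by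
      field_simp
    rw [hid]
    have := hclose i ℓ
    nlinarith [sq_nonneg (What ℓ)]
  have hsum2 : (∑ i, (w i / w ℓ) ^ 2 * s i ℓ) * (n:ℝ) ≤ b ^ 2 * A * S := by
    calc (∑ i, (w i / w ℓ) ^ 2 * s i ℓ) * (n:ℝ)
        = ∑ i, ((n:ℝ) * (w i / w ℓ) ^ 2) * s i ℓ := by
          rw [Finset.sum_mul]; apply Finset.sum_congr rfl; intro i _; ring
      _ ≤ ∑ i, (b ^ 2 * A) * s i ℓ :=
          Finset.sum_le_sum fun i _ => mul_le_mul_of_nonneg_right (hrho i) (hs i ℓ)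
      _ = b ^ 2 * A * S := by rw [← Finset.mul_sum]
  -- combine
  have hW2 : (0:ℝ) < What ℓ ^ 2 := by positivity
  have key : (∑ i, (w i / w ℓ) ^ 2 * s i ℓ) ≤ b ^ 2 * (T / (n:ℝ) ^ 2) * A := by
    have hba : (0:ℝ) ≤ b ^ 2 * A := by positivity
    have h1 := mul_le_mul_of_nonneg_right hsum2 hnpos.le
    have h2 := mul_le_mul_of_nonneg_left hnS hba
    have hgoal : (∑ i, (w i / w ℓ) ^ 2 * s i ℓ) * (n:ℝ) ^ 2 ≤ b ^ 2 * A * T := by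
      nlinarith
    have h3 : (∑ i, (w i / w ℓ) ^ 2 * s i ℓ) ≤ b ^ 2 * A * T / (n:ℝ) ^ 2 :=
      (le_div_iff₀ (by positivity)).mpr hgoal
    refine h3.trans_eq ?_
    ring
  calc (∑ i, (What i - (What ℓ / w ℓ) * w i) ^ 2)
      ≤ What ℓ ^ 2 * ∑ i, (w i / w ℓ) ^ 2 * s i ℓ := hnum
    _ ≤ What ℓ ^ 2 * (b ^ 2 * (T / (n:ℝ) ^ 2) * A) :=
        mul_le_mul_of_nonneg_left key hW2.le
    _ = b ^ 2 * (T / (n:ℝ) ^ 2) * (What ℓ ^ 2 * A) := by ring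
end
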